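/- Let $T : C_b([\epsilon, \epsilon+\delta]\times S) \to C_b([\epsilon,\epsilon+\delta]\times S)$ be defined by $Tf(\eta,i) = e^{\frac{\epsilon}{\alpha}\|r\|_\infty} + \frac{1}{\alpha}\int_\epsilon^\eta \inf_{v_1}\sup_{v_2}[\frac{1}{\theta}\Pi_{v_1,v_2}f(\theta,i) + r(i,v_1,v_2)f(\theta,i)]\,d\theta$. Then for all $f_1,f_2$, $\|Tf_1 - Tf_2\|_\infty \le \frac{1}{\alpha}[\|r\|_\infty\delta + 2M\ln(1+\delta/\epsilon)]\,\|f_1-f_2\|_\infty$. In particular, if $\delta>0$ is small enough that $\frac{1}{\alpha}[\|r\|_\infty\delta + 2M\ln(1+\delta/\epsilon)] < 1$, then $T$ is a contraction and has a unique fixed point. -/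

import Mathlib

/-!
At time `θ` the integrand of `T f` is the Hamiltonian `x ↦ inf_{v₁} sup_{v₂} (θ⁻¹ Π x + r xᵢ)`
evaluated at the slice `f (θ, ·) ∈ ℓ^∞`. Each row of `Π` has `ℓ¹`-norm `-2 πᵢᵢ ≤ 2M`, so this is
`(2M/θ + ‖r‖∞)`-Lipschitz in the slice; integrating `2M/θ + ‖r‖∞` over `[ε, ε + δ]` gives the
constant, and Banach's fixed point theorem gives the fixed point.

The subtle point is integrability: an infimum of uncountably many lower semicontinuous functions
need not be measurable, and a non-integrable interval integral is `0`. It is the continuity of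
every `T f` that forces measurability. If the integrand of `f` is not measurable on `(t, ε + δ]`,
glue any continuous curve of slices on `[ε, t]` to `f` on `[t, ε + δ]`; at the right end `σ` of the
interval where the glued integrand is integrable, continuity of `T` pins `∫_ε^σ` to `0`, so the
integral over `[ε, t]` of the curve's Hamiltonian does not depend on the curve. Ramping from a
constant slice `y` to `f (t, ·)` over `[m, t]` and letting `t ↓ m` shows `∫_ε^m H(y, 1/θ) dθ = 0`.
Hence the integrand vanishes to the left of every bad point, and is measurable after all.
-/

open MeasureTheory Set
open Filter Topology
open scoped BoundedContinuousFunction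

section InfSup

variable {ι κ : Type*} [Nonempty ι] [Nonempty κ]

theorem ciInf_ciSup_le_add {A A' : ι → κ → ℝ} {B B' c : ℝ} (hA : ∀ a b, |A a b| ≤ B)
    (hA' : ∀ a b, A' a b ≤ B') (h : ∀ a b, A a b ≤ A' a b + c) :
    ⨅ a, ⨆ b, A a b ≤ (⨅ a, ⨆ b, A' a b) + c := by
  have bddA : ∀ a, BddAbove (range (A a)) :=
    fun a => ⟨B, by rintro _ ⟨b, rfl⟩; exact (abs_le.1 (hA a b)).2⟩
  have bddA' : ∀ a, BddAbove (range (A' a)) := fun a => ⟨B', by rintro _ ⟨b, rfl⟩; exact hA' a b⟩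
  have bddSup : BddBelow (range fun a => ⨆ b, A a b) := by
    refine ⟨-B, ?_⟩
    rintro _ ⟨a, rfl⟩
    exact (abs_le.1 (hA a (Classical.arbitrary κ))).1.trans (le_ciSup (bddA a) _)
  rw [← sub_le_iff_le_add]
  refine le_ciInf fun a => sub_le_iff_le_add.2 ?_
  calc ⨅ a, ⨆ b, A a b ≤ ⨆ b, A a b := ciInf_le bddSup a
    _ ≤ (⨆ b, A' a b) + c := ciSup_le fun b => (h a b).trans (by gcongr; exact le_ciSup (bddA' a) b)

theorem abs_ciInf_ciSup_sub_le {A A' : ι → κ → ℝ} {B B' c : ℝ} (hA : ∀ a b, |A a b| ≤ B)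
    (hA' : ∀ a b, |A' a b| ≤ B') (h : ∀ a b, |A a b - A' a b| ≤ c) :
    |(⨅ a, ⨆ b, A a b) - ⨅ a, ⨆ b, A' a b| ≤ c := by
  have h₁ := ciInf_ciSup_le_add hA (fun a b => (abs_le.1 (hA' a b)).2)
    (fun a b => by linarith [(abs_le.1 (h a b)).2])
  have h₂ := ciInf_ciSup_le_add hA' (fun a b => (abs_le.1 (hA a b)).2)
    (fun a b => by linarith [(abs_le.1 (h a b)).1])
  exact abs_sub_le_iff.2 ⟨by linarith, by linarith⟩

end InfSup

theorem hasSum_abs_of_hasSum_zero {ι : Type*} [DecidableEq ι] {p : ι → ℝ} {i : ι}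
    (hp : ∀ j, j ≠ i → 0 ≤ p j) (hsum : HasSum p 0) : HasSum (fun j => |p j|) (-2 * p i) := by
  have hpi : p i ≤ 0 := by
    have := (hsum.update i 0).nonneg fun j => by
      by_cases hj : j = i
      · simp [hj]
      · simp [hj, hp j hj]
    linarith
  have heq : (fun j => |p j|) = Function.update p i (-p i) := by
    funext j
    by_cases hj : j = i
    · subst hj; simp [abs_of_nonpos hpi]
    · simp [hj, abs_of_nonneg (hp j hj)]
  rw [heq]
  simpa [two_mul, sub_eq_add_neg] using hsum.update i (-p i)

section Row

variable {ι : Type*} [TopologicalSpace ι] {p : ι → ℝ}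

theorem Summable.mul_bcf (hp : Summable p) (x : ι →ᵇ ℝ) :
    Summable fun j => p j * x j :=
  .of_norm_bounded ((summable_abs_iff.2 hp).mul_right ‖x‖) fun j => by
    rw [norm_mul, Real.norm_eq_abs]
    exact mul_le_mul_of_nonneg_left (x.norm_coe_le_norm j) (abs_nonneg _)

theorem abs_tsum_mul_bcf_le (hp : Summable p) (x : ι →ᵇ ℝ) :
    |∑' j, p j * x j| ≤ (∑' j, |p j|) * ‖x‖ := by
  rw [← tsum_mul_right, ← Real.norm_eq_abs]
  refine tsum_of_norm_bounded ((summable_abs_iff.2 hp).mul_right ‖x‖).hasSum fun j => ?_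
  rw [norm_mul, Real.norm_eq_abs]
  exact mul_le_mul_of_nonneg_left (x.norm_coe_le_norm j) (abs_nonneg _)

end Row

section Hamiltonian

variable {V1 V2 : Type*} {π : ℕ → ℕ → V1 → V2 → ℝ} {r : ℕ → V1 → V2 → ℝ} {L R : ℝ}

structure BoundedRates (π : ℕ → ℕ → V1 → V2 → ℝ) (r : ℕ → V1 → V2 → ℝ) (L R : ℝ) : Prop where
  summable : ∀ i v1 v2, Summable fun j => π i j v1 v2
  tsum_abs_le : ∀ i v1 v2, ∑' j, |π i j v1 v2| ≤ L
  abs_le : ∀ i v1 v2, |r i v1 v2| ≤ R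

theorem boundedRates_of_conservative {M rM : ℝ} (hπoff : ∀ i j v1 v2, i ≠ j → 0 ≤ π i j v1 v2)
    (hπcons : ∀ i v1 v2, HasSum (fun j => π i j v1 v2) 0) (hπM : ∀ i v1 v2, -π i i v1 v2 ≤ M)
    (hr0 : ∀ i v1 v2, 0 ≤ r i v1 v2) (hrM : ∀ i v1 v2, r i v1 v2 ≤ rM) :
    BoundedRates π r (2 * M) rM where
  summable i v1 v2 := (hπcons i v1 v2).summable
  tsum_abs_le i v1 v2 := by
    rw [(hasSum_abs_of_hasSum_zero (fun j hj => hπoff i j v1 v2 hj.symm) (hπcons i v1 v2)).tsum_eq]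
    linarith [hπM i v1 v2]
  abs_le i v1 v2 := (abs_of_nonneg (hr0 i v1 v2)).trans_le (hrM i v1 v2)

noncomputable def hamiltonian (π : ℕ → ℕ → V1 → V2 → ℝ) (r : ℕ → V1 → V2 → ℝ) (i : ℕ)
    (x : ℕ →ᵇ ℝ) (s : ℝ) : ℝ :=
  ⨅ v1, ⨆ v2, (s * ∑' j, π i j v1 v2 * x j + r i v1 v2 * x i)

@[simp]
theorem hamiltonian_zero (i : ℕ) (s : ℝ) : hamiltonian π r i 0 s = 0 := by
  simp [hamiltonian]

namespace BoundedRates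

theorem abs_payoff_sub_le (h : BoundedRates π r L R) (i : ℕ) (v1 : V1) (v2 : V2)
    (x x' : ℕ →ᵇ ℝ) (s s' : ℝ) :
    |(s * ∑' j, π i j v1 v2 * x j + r i v1 v2 * x i)
        - (s' * ∑' j, π i j v1 v2 * x' j + r i v1 v2 * x' i)|
      ≤ (L * |s| + R) * ‖x - x'‖ + L * |s - s'| * ‖x'‖ := by
  have hsum := h.summable i v1 v2
  have hdiff : ∑' j, π i j v1 v2 * x j - ∑' j, π i j v1 v2 * x' j
      = ∑' j, π i j v1 v2 * (x - x') j := by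
    rw [← (hsum.mul_bcf x).tsum_sub (hsum.mul_bcf x')]
    simp [mul_sub]
  have hrow (y : ℕ →ᵇ ℝ) : |∑' j, π i j v1 v2 * y j| ≤ L * ‖y‖ :=
    (abs_tsum_mul_bcf_le hsum y).trans
      (mul_le_mul_of_nonneg_right (h.tsum_abs_le i v1 v2) (norm_nonneg y))
  have hri : |r i v1 v2 * (x - x') i| ≤ R * ‖x - x'‖ := by
    rw [abs_mul]
    exact mul_le_mul (h.abs_le i v1 v2) ((x - x').norm_coe_le_norm i) (abs_nonneg _)
      ((abs_nonneg _).trans (h.abs_le i v1 v2))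
  calc _ = |s * ∑' j, π i j v1 v2 * (x - x') j + r i v1 v2 * (x - x') i
          + (s - s') * ∑' j, π i j v1 v2 * x' j| := by
        rw [← hdiff, BoundedContinuousFunction.coe_sub, Pi.sub_apply]; ring_nf
    _ ≤ |s| * (L * ‖x - x'‖) + R * ‖x - x'‖ + |s - s'| * (L * ‖x'‖) := by
        refine (abs_add_le _ _).trans (add_le_add ((abs_add_le _ _).trans (add_le_add ?_ hri)) ?_)
        · rw [abs_mul]; exact mul_le_mul_of_nonneg_left (hrow _) (abs_nonneg _)
        · rw [abs_mul]; exact mul_le_mul_of_nonneg_left (hrow _) (abs_nonneg _)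
    _ = _ := by ring

variable [Nonempty V1] [Nonempty V2]

theorem abs_hamiltonian_sub_le (h : BoundedRates π r L R) (i : ℕ) (x x' : ℕ →ᵇ ℝ) (s s' : ℝ) :
    |hamiltonian π r i x s - hamiltonian π r i x' s'|
      ≤ (L * |s| + R) * ‖x - x'‖ + L * |s - s'| * ‖x'‖ := by
  have hbound (y : ℕ →ᵇ ℝ) (t : ℝ) (v1 : V1) (v2 : V2) :
      |t * ∑' j, π i j v1 v2 * y j + r i v1 v2 * y i| ≤ (L * |t| + R) * ‖y‖ := by
    simpa using h.abs_payoff_sub_le i v1 v2 y 0 t t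
  exact abs_ciInf_ciSup_sub_le (hbound x s) (hbound x' s') (h.abs_payoff_sub_le i · · x x' s s')

theorem abs_hamiltonian_le (h : BoundedRates π r L R) (i : ℕ) (x : ℕ →ᵇ ℝ) (s : ℝ) :
    |hamiltonian π r i x s| ≤ (L * |s| + R) * ‖x‖ := by
  simpa using h.abs_hamiltonian_sub_le i x 0 s s

theorem continuous_hamiltonian (h : BoundedRates π r L R) (i : ℕ) :
    Continuous fun p : (ℕ →ᵇ ℝ) × ℝ => hamiltonian π r i p.1 p.2 := by
  refine continuous_iff_continuousAt.2 fun q => ?_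
  rw [ContinuousAt, ← tendsto_sub_nhds_zero_iff]
  refine squeeze_zero_norm (a := fun p => (L * |p.2| + R) * ‖p.1 - q.1‖ + L * |p.2 - q.2| * ‖q.1‖)
    (fun p => by simpa using h.abs_hamiltonian_sub_le i p.1 q.1 p.2 q.2) ?_
  have hcont : Continuous fun p : (ℕ →ᵇ ℝ) × ℝ =>
      (L * |p.2| + R) * ‖p.1 - q.1‖ + L * |p.2 - q.2| * ‖q.1‖ := by fun_prop
  simpa using hcont.tendsto q

theorem rateBound_nonneg (h : BoundedRates π r L R) : 0 ≤ L :=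
  (tsum_nonneg fun _ => abs_nonneg _).trans
    (h.tsum_abs_le 0 (Classical.arbitrary V1) (Classical.arbitrary V2))

theorem rewardBound_nonneg (h : BoundedRates π r L R) : 0 ≤ R :=
  (abs_nonneg _).trans (h.abs_le 0 (Classical.arbitrary V1) (Classical.arbitrary V2))

theorem abs_hamiltonian_one_div_le (h : BoundedRates π r L R) (i : ℕ) {x : ℕ →ᵇ ℝ}
    {a θ C : ℝ} (ha : 0 < a) (haθ : a ≤ θ) (hx : ‖x‖ ≤ C) :
    |hamiltonian π r i x (1 / θ)| ≤ (L / a + R) * C := by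
  have hθ : |1 / θ| ≤ 1 / a := by
    rw [abs_of_pos (one_div_pos.2 (ha.trans_le haθ))]
    exact one_div_le_one_div_of_le ha haθ
  calc _ ≤ (L * |1 / θ| + R) * ‖x‖ := h.abs_hamiltonian_le i x _
    _ ≤ (L / a + R) * C := by
      have := h.rateBound_nonneg
      have := h.rewardBound_nonneg
      rw [← mul_one_div L a]
      gcongr

theorem continuousOn_hamiltonian_curve (h : BoundedRates π r L R) (i : ℕ)
    {γ : ℝ → ℕ →ᵇ ℝ} (hγ : Continuous γ) :
    ContinuousOn (fun θ => hamiltonian π r i (γ θ) (1 / θ)) (Ioi 0) := by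
  have hinv : ContinuousOn (fun θ : ℝ => 1 / θ) (Ioi 0) :=
    fun _ hθ => (continuousAt_const.div continuousAt_id (ne_of_gt hθ)).continuousWithinAt
  have hcurve : ContinuousOn (fun θ : ℝ => (γ θ, 1 / θ)) (Ioi 0) :=
    hγ.continuousOn.prodMk hinv
  simpa only [Function.comp_def] using (h.continuous_hamiltonian i).comp_continuousOn hcurve

end BoundedRates

end Hamiltonian

section Slice

variable {a b : ℝ} (hab : a ≤ b)

noncomputable def slice (f : Icc a b × ℕ →ᵇ ℝ) (θ : ℝ) : ℕ →ᵇ ℝ :=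
  f.compContinuous ⟨fun j => (projIcc a b hab θ, j), by fun_prop⟩

@[simp]
theorem slice_apply (f : Icc a b × ℕ →ᵇ ℝ) (θ : ℝ) (j : ℕ) :
    slice hab f θ j = IccExtend hab (fun t => f (t, j)) θ :=
  rfl

theorem norm_slice_le (f : Icc a b × ℕ →ᵇ ℝ) (θ : ℝ) : ‖slice hab f θ‖ ≤ ‖f‖ :=
  BoundedContinuousFunction.norm_compContinuous_le _ _

theorem slice_sub (f g : Icc a b × ℕ →ᵇ ℝ) (θ : ℝ) :
    slice hab (f - g) θ = slice hab f θ - slice hab g θ :=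
  rfl

theorem exists_slice_glue (f : Icc a b × ℕ →ᵇ ℝ) {t : ℝ} (ht : t ∈ Icc a b)
    {γ : ℝ → ℕ →ᵇ ℝ} (hγ : Continuous γ) (hγt : γ t = slice hab f t) :
    ∃ w : Icc a b × ℕ →ᵇ ℝ, (∀ θ ∈ Icc a t, slice hab w θ = γ θ) ∧
      ∀ θ, t ≤ θ → slice hab w θ = slice hab f θ := by
  classical
  obtain ⟨C, hC⟩ := isCompact_Icc.exists_bound_of_continuousOn (hγ.continuousOn (s := Icc a b))
  let w₀ : Icc a b × ℕ → ℝ := fun p => if (p.1 : ℝ) ≤ t then γ p.1 p.2 else f p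
  have hcont : Continuous w₀ := by
    refine Continuous.if_le ?_ f.continuous (by fun_prop) continuous_const ?_
    · exact continuous_eval.comp ((hγ.comp (by fun_prop)).prodMk continuous_snd)
    · rintro ⟨θ, j⟩ hθ
      simp only at hθ
      rw [hθ, hγt, slice_apply, ← hθ, IccExtend_val]
  have hbound : ∀ p, ‖w₀ p‖ ≤ max C ‖f‖ := by
    intro p
    by_cases hp : (p.1 : ℝ) ≤ t
    · simp only [w₀, if_pos hp]
      exact ((γ p.1).norm_coe_le_norm p.2).trans ((hC _ p.1.2).trans (le_max_left _ _))
    · simp only [w₀, if_neg hp]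
      exact (f.norm_coe_le_norm p).trans (le_max_right _ _)
  refine ⟨.ofNormedAddCommGroup w₀ hcont _ hbound, fun θ hθ => ?_, fun θ hθ => ?_⟩ <;> ext j
  · have hθ' : θ ∈ Icc a b := ⟨hθ.1, hθ.2.trans ht.2⟩
    simp [w₀, IccExtend_of_mem hab _ hθ', hθ.2]
  · simp only [slice_apply, IccExtend, Function.comp_apply]
    by_cases hp : (projIcc a b hab θ : ℝ) ≤ t
    · have hpt : projIcc a b hab θ = projIcc a b hab t := by
        rw [projIcc_of_mem hab ht]
        exact Subtype.ext (le_antisymm hp (le_max_of_le_right (le_min ht.2 hθ)))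
      have hγt' : γ t j = f (⟨t, ht⟩, j) := by
        simpa [IccExtend_of_mem hab _ ht] using congrArg (· j) hγt
      rw [hpt, projIcc_of_mem hab ht]
      simp [w₀, hγt']
    · simp [w₀, hp]

end Slice

section Measurability

variable {g : ℝ → ℝ}

theorem aestronglyMeasurable_Ioc_of_forall_Ioc {a b : ℝ}
    (h : ∀ c d, a < c → c < d → d < b → AEStronglyMeasurable g (volume.restrict (Ioc c d))) :
    AEStronglyMeasurable g (volume.restrict (Ioc a b)) := by
  rw [← Measure.restrict_congr_set Ioo_ae_eq_Ioc]
  have hcover : Ioo a b ⊆ ⋃ n : ℕ, Ioc (a + 1 / (n + 1)) (b - 1 / (n + 1)) := by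
    intro x hx
    obtain ⟨n, hn⟩ := exists_nat_one_div_lt (lt_min (sub_pos.2 hx.1) (sub_pos.2 hx.2))
    have := min_le_left (x - a) (b - x)
    have := min_le_right (x - a) (b - x)
    exact mem_iUnion.2 ⟨n, by linarith, by linarith⟩
  refine (AEStronglyMeasurable.iUnion fun n => ?_).mono_set hcover
  have hn : (0 : ℝ) < 1 / (n + 1) := Nat.one_div_pos_of_nat
  rcases lt_or_ge (a + 1 / (n + 1)) (b - 1 / (n + 1)) with hcd | hcd
  · exact h _ _ (by linarith) hcd (by linarith)
  · rw [Ioc_eq_empty hcd.not_gt]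
    simp

theorem exists_aestronglyMeasurable_frontier {t b : ℝ} (htb : t ≤ b)
    (hbad : ¬ AEStronglyMeasurable g (volume.restrict (Ioc t b))) :
    ∃ σ ∈ Ico t b, AEStronglyMeasurable g (volume.restrict (Ioc t σ)) ∧
      ∀ η ∈ Ioc σ b, ¬ AEStronglyMeasurable g (volume.restrict (Ioc t η)) := by
  set S := {η ∈ Icc t b | AEStronglyMeasurable g (volume.restrict (Ioc t η))}
  have htS : t ∈ S := ⟨⟨le_rfl, htb⟩, by simp⟩
  have hbdd : BddAbove S := ⟨b, fun η hη => hη.1.2⟩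
  have hgood : AEStronglyMeasurable g (volume.restrict (Ioc t (sSup S))) := by
    refine aestronglyMeasurable_Ioc_of_forall_Ioc fun c d htc _ hd => ?_
    obtain ⟨η, hηS, hdη⟩ := exists_lt_of_lt_csSup ⟨t, htS⟩ hd
    exact hηS.2.mono_set (Ioc_subset_Ioc htc.le hdη.le)
  have hσb : sSup S ≤ b := csSup_le ⟨t, htS⟩ fun η hη => hη.1.2
  refine ⟨sSup S, ⟨le_csSup hbdd htS, hσb.lt_of_ne ?_⟩, hgood, fun η hη hηgood => ?_⟩
  · rintro hσ
    exact hbad (hσ ▸ hgood)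
  · exact hη.1.not_ge (le_csSup hbdd ⟨⟨(le_csSup hbdd htS).trans hη.1.le, hη.2⟩, hηgood⟩)

theorem intervalIntegrable_iff_aestronglyMeasurable_of_abs_le {a b C : ℝ} (hab : a ≤ b)
    (hg : ∀ x ∈ Ioc a b, |g x| ≤ C) :
    IntervalIntegrable g volume a b ↔ AEStronglyMeasurable g (volume.restrict (Ioc a b)) := by
  rw [intervalIntegrable_iff_integrableOn_Ioc_of_le hab]
  refine ⟨fun hi => hi.aestronglyMeasurable, fun hm => ?_⟩
  exact (integrableOn_const measure_Ioc_lt_top.ne).mono' hm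
    ((ae_restrict_iff' measurableSet_Ioc).2 (.of_forall hg))

theorem eq_zero_of_forall_integral_eq_zero {a b x : ℝ} (hc : ContinuousOn g (Icc a b))
    (hz : ∀ m ∈ Ioo a b, ∫ θ in a..m, g θ = 0) (hx : x ∈ Ioo a b) : g x = 0 := by
  have hderiv : HasDerivAt (fun u => ∫ θ in a..u, g θ) (g x) x :=
    intervalIntegral.integral_hasDerivAt_right
      ((hc.mono (uIcc_of_le hx.1.le ▸ Icc_subset_Icc_right hx.2.le)).intervalIntegrable)
      ((hc.mono Ioo_subset_Icc_self).stronglyMeasurableAtFilter isOpen_Ioo x hx)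
      (hc.continuousAt (Icc_mem_nhds hx.1 hx.2))
  have hzero : HasDerivAt (fun u => ∫ θ in a..u, g θ) 0 x :=
    (hasDerivAt_const x 0).congr_of_eventuallyEq
      (eventually_of_mem (Ioo_mem_nhds hx.1 hx.2) hz)
  exact hderiv.unique hzero

theorem integral_div_add_const {a b L R : ℝ} (ha : 0 < a) (hb : 0 < b) :
    ∫ θ in a..b, (L / θ + R) = R * (b - a) + L * Real.log (b / a) := by
  have hinv : IntervalIntegrable (fun θ : ℝ => L * θ⁻¹) volume a b :=
    (intervalIntegral.intervalIntegrable_inv (fun x hx => ((lt_min ha hb).trans_le hx.1).ne')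
      continuousOn_id).const_mul L
  simp_rw [div_eq_mul_inv L]
  rw [intervalIntegral.integral_add hinv intervalIntegrable_const,
    intervalIntegral.integral_const_mul, integral_inv_of_pos ha hb,
    intervalIntegral.integral_const, smul_eq_mul]
  ring

end Measurability

section Operator

variable {V1 V2 : Type*} {π : ℕ → ℕ → V1 → V2 → ℝ}
  {r : ℕ → V1 → V2 → ℝ} {L R a b α c : ℝ} {hab : a ≤ b}
  {T : (Icc a b × ℕ →ᵇ ℝ) → Icc a b × ℕ →ᵇ ℝ}

noncomputable def integrand (π : ℕ → ℕ → V1 → V2 → ℝ) (r : ℕ → V1 → V2 → ℝ) (hab : a ≤ b)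
    (f : Icc a b × ℕ →ᵇ ℝ) (i : ℕ) (θ : ℝ) : ℝ :=
  hamiltonian π r i (slice hab f θ) (1 / θ)

def IsHJIOperator (π : ℕ → ℕ → V1 → V2 → ℝ) (r : ℕ → V1 → V2 → ℝ) (hab : a ≤ b) (c α : ℝ)
    (T : (Icc a b × ℕ →ᵇ ℝ) → Icc a b × ℕ →ᵇ ℝ) : Prop :=
  ∀ f (η : Icc a b) i, T f (η, i) = c + 1 / α * ∫ θ in a..(η : ℝ), integrand π r hab f i θ

namespace IsHJIOperator

theorem integral_eq_zero_of_not_intervalIntegrable (hT : IsHJIOperator π r hab c α T)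
    (hα : α ≠ 0) (w : Icc a b × ℕ →ᵇ ℝ) (i : ℕ) {σ : ℝ} (hσ : σ ∈ Ico a b)
    (hbad : ∀ η ∈ Ioc σ b, ¬ IntervalIntegrable (integrand π r hab w i) volume a η) :
    ∫ θ in a..σ, integrand π r hab w i θ = 0 := by
  -- `T w` is continuous and takes its junk value `c` to the right of `σ`.
  set G : ℝ → ℝ := fun η => T w (projIcc a b hab η, i)
  have hG : Continuous G := (T w).continuous.comp (continuous_projIcc.prodMk continuous_const)
  have hGeq : ∀ η ∈ Icc a b, G η = c + 1 / α * ∫ θ in a..η, integrand π r hab w i θ :=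
    fun η hη => by simp only [G, projIcc_of_mem hab hη]; exact hT w ⟨η, hη⟩ i
  have hlim : Tendsto G (𝓝[>] σ) (𝓝 c) := by
    refine tendsto_const_nhds.congr' ?_
    filter_upwards [Ioc_mem_nhdsGT hσ.2] with η hη
    rw [hGeq η ⟨hσ.1.trans hη.1.le, hη.2⟩, intervalIntegral.integral_undef (hbad η hη)]
    ring
  have hσc : G σ = c := tendsto_nhds_unique ((hG.tendsto σ).mono_left nhdsWithin_le_nhds) hlim
  rw [hGeq σ (Ico_subset_Icc_self hσ)] at hσc
  simpa [hα] using hσc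

variable [Nonempty V1] [Nonempty V2]

theorem exists_integral_hamiltonian_eq (hT : IsHJIOperator π r hab c α T)
    (h : BoundedRates π r L R) (ha : 0 < a) (hα : α ≠ 0) (f : Icc a b × ℕ →ᵇ ℝ) (i : ℕ)
    {t : ℝ} (ht : t ∈ Icc a b)
    (hbad : ¬ AEStronglyMeasurable (integrand π r hab f i) (volume.restrict (Ioc t b))) :
    ∃ P, ∀ γ : ℝ → ℕ →ᵇ ℝ, Continuous γ → γ t = slice hab f t →
      ∫ θ in a..t, hamiltonian π r i (γ θ) (1 / θ) = P := by
  -- Glued to `f` after `t`, every `γ` gives an integrand that is integrable exactly up to the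
  -- measurability frontier `σ` of `f`, and its integral up to `σ` vanishes.
  obtain ⟨σ, hσ, hgood, hbad'⟩ := exists_aestronglyMeasurable_frontier ht.2 hbad
  refine ⟨-∫ θ in t..σ, integrand π r hab f i θ, fun γ hγ hγt => ?_⟩
  obtain ⟨w, hw_le, hw_ge⟩ := exists_slice_glue hab f ht hγ hγt
  have heq_le : EqOn (integrand π r hab w i) (fun θ => hamiltonian π r i (γ θ) (1 / θ))
      (Icc a t) := fun θ hθ => by simp only [integrand, hw_le θ hθ]
  have heq_ge : EqOn (integrand π r hab w i) (integrand π r hab f i) (Ici t) :=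
    fun θ hθ => by simp only [integrand, hw_ge θ hθ]
  have hint_le : IntervalIntegrable (integrand π r hab w i) volume a t :=
    ContinuousOn.intervalIntegrable_of_Icc ht.1 <|
      ((h.continuousOn_hamiltonian_curve i hγ).mono fun θ hθ => ha.trans_le hθ.1).congr heq_le
  have hint_ge : IntervalIntegrable (integrand π r hab w i) volume t σ := by
    refine (intervalIntegrable_iff_aestronglyMeasurable_of_abs_le hσ.1 fun θ hθ =>
      h.abs_hamiltonian_one_div_le i ha (ht.1.trans hθ.1.le) (norm_slice_le hab w θ)).2 ?_
    exact hgood.congr ((ae_restrict_iff' measurableSet_Ioc).2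
      (.of_forall fun θ hθ => (heq_ge hθ.1.le).symm))
  have hzero := hT.integral_eq_zero_of_not_intervalIntegrable hα w i ⟨ht.1.trans hσ.1, hσ.2⟩
    fun η hη hint => hbad' η hη <| by
      have := ((intervalIntegrable_iff_integrableOn_Ioc_of_le
        (ht.1.trans (hσ.1.trans hη.1.le))).1 hint).aestronglyMeasurable
      exact (this.mono_set (Ioc_subset_Ioc_left ht.1)).congr
        ((ae_restrict_iff' measurableSet_Ioc).2 (.of_forall fun θ hθ => heq_ge hθ.1.le))
  rw [← intervalIntegral.integral_add_adjacent_intervals hint_le hint_ge] at hzero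
  have h_le : ∫ θ in a..t, integrand π r hab w i θ
      = ∫ θ in a..t, hamiltonian π r i (γ θ) (1 / θ) :=
    intervalIntegral.integral_congr (by rwa [uIcc_of_le ht.1])
  have h_ge : ∫ θ in t..σ, integrand π r hab w i θ = ∫ θ in t..σ, integrand π r hab f i θ :=
    intervalIntegral.integral_congr fun θ hθ => heq_ge (by rw [uIcc_of_le hσ.1] at hθ; exact hθ.1)
  linarith

theorem abs_integral_hamiltonian_le (hT : IsHJIOperator π r hab c α T)
    (h : BoundedRates π r L R) (ha : 0 < a) (hα : α ≠ 0) (f : Icc a b × ℕ →ᵇ ℝ) (i : ℕ)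
    {t : ℝ} (ht : t ∈ Icc a b)
    (hbad : ¬ AEStronglyMeasurable (integrand π r hab f i) (volume.restrict (Ioc t b)))
    {m : ℝ} (hm : a ≤ m) (hmt : m < t) (y : ℕ →ᵇ ℝ) :
    |∫ θ in a..m, hamiltonian π r i y (1 / θ)|
      ≤ (t - m) * (2 * (L / a + R) * (2 * ‖y‖ + ‖f‖)) := by
  -- Compare the ramps from `y` and from `0` to `slice hab f t` over `[m, t]`.
  obtain ⟨P, hP⟩ := hT.exists_integral_hamiltonian_eq h ha hα f i ht hbad
  set z := slice hab f t
  set ρ : ℝ → ℝ := fun θ => (projIcc m t hmt.le θ - m) / (t - m)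
  have hρ : Continuous ρ := by fun_prop
  have hρ_le (θ : ℝ) (hθ : θ ≤ m) : ρ θ = 0 := by simp [ρ, projIcc_of_le_left _ hθ]
  have hρt : ρ t = 1 := by simp [ρ, div_self (sub_pos.2 hmt).ne']
  have hρ_abs (θ : ℝ) : |ρ θ| ≤ 1 := by
    have h₁ := (projIcc m t hmt.le θ).2
    rw [abs_le, le_div_iff₀ (sub_pos.2 hmt), div_le_one (sub_pos.2 hmt)]
    constructor <;> linarith [h₁.1, h₁.2]
  set γ : (ℕ →ᵇ ℝ) → ℝ → ℕ →ᵇ ℝ := fun x θ => x + ρ θ • (z - x)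
  have hsplit (x : ℕ →ᵇ ℝ) : (∫ θ in a..m, hamiltonian π r i x (1 / θ))
      + ∫ θ in m..t, hamiltonian π r i (γ x θ) (1 / θ) = P := by
    have hγ : Continuous (γ x) := by fun_prop
    have hcont : ContinuousOn (fun θ => hamiltonian π r i (γ x θ) (1 / θ)) (Icc a t) :=
      (h.continuousOn_hamiltonian_curve i hγ).mono fun θ hθ => ha.trans_le hθ.1
    have hγa : ∫ θ in a..m, hamiltonian π r i x (1 / θ)
        = ∫ θ in a..m, hamiltonian π r i (γ x θ) (1 / θ) :=
      intervalIntegral.integral_congr fun θ hθ => by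
        rw [uIcc_of_le hm] at hθ
        simp [γ, hρ_le θ hθ.2]
    rw [hγa, intervalIntegral.integral_add_adjacent_intervals
      ((hcont.mono (Icc_subset_Icc_right hmt.le)).intervalIntegrable_of_Icc hm)
      ((hcont.mono (Icc_subset_Icc_left hm)).intervalIntegrable_of_Icc hmt.le)]
    exact hP _ hγ (by simp [γ, hρt])
  have hblend (x : ℕ →ᵇ ℝ) (hx : ‖x‖ ≤ ‖y‖) :
      |∫ θ in m..t, hamiltonian π r i (γ x θ) (1 / θ)|
        ≤ (t - m) * ((L / a + R) * (2 * ‖y‖ + ‖f‖)) := by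
    rw [← Real.norm_eq_abs, mul_comm, ← abs_of_pos (sub_pos.2 hmt)]
    refine intervalIntegral.norm_integral_le_of_norm_le_const fun θ hθ => ?_
    rw [uIoc_of_le hmt.le] at hθ
    refine h.abs_hamiltonian_one_div_le i ha (hm.trans hθ.1.le) ?_
    calc ‖γ x θ‖ ≤ ‖x‖ + |ρ θ| * (‖z‖ + ‖x‖) := by
          refine (norm_add_le _ _).trans (add_le_add_right ?_ _)
          rw [norm_smul, Real.norm_eq_abs]
          exact mul_le_mul_of_nonneg_left (norm_sub_le _ _) (abs_nonneg _)
      _ ≤ ‖x‖ + 1 * (‖z‖ + ‖x‖) := by gcongr; exact hρ_abs θ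
      _ ≤ 2 * ‖y‖ + ‖f‖ := by linarith [norm_slice_le hab f t]
  have hy := hsplit y
  have h0 := hsplit 0
  simp only [hamiltonian_zero, intervalIntegral.integral_zero, zero_add] at h0
  calc |∫ θ in a..m, hamiltonian π r i y (1 / θ)|
      = |(∫ θ in m..t, hamiltonian π r i (γ 0 θ) (1 / θ))
          - ∫ θ in m..t, hamiltonian π r i (γ y θ) (1 / θ)| := by
        congr 1; linarith
    _ ≤ _ := by
        refine (abs_sub _ _).trans ?_
        linarith [hblend 0 (by simp), hblend y le_rfl]

theorem integral_hamiltonian_eq_zero (hT : IsHJIOperator π r hab c α T)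
    (h : BoundedRates π r L R) (ha : 0 < a) (hα : α ≠ 0) (f : Icc a b × ℕ →ᵇ ℝ) (i : ℕ)
    {t₀ : ℝ} (ht₀ : t₀ ≤ b)
    (hbad : ¬ AEStronglyMeasurable (integrand π r hab f i) (volume.restrict (Ioc t₀ b)))
    {m : ℝ} (hm : m ∈ Ioo a t₀) (y : ℕ →ᵇ ℝ) :
    ∫ θ in a..m, hamiltonian π r i y (1 / θ) = 0 := by
  set B := 2 * (L / a + R) * (2 * ‖y‖ + ‖f‖)
  have hlim : Tendsto (fun t => (t - m) * B) (𝓝[>] m) (𝓝 0) := by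
    have : Tendsto (fun t => (t - m) * B) (𝓝 m) (𝓝 ((m - m) * B)) :=
      ((continuous_id.sub continuous_const).mul continuous_const).tendsto m
    simpa using this.mono_left nhdsWithin_le_nhds
  refine abs_nonpos_iff.1 (ge_of_tendsto hlim ?_)
  filter_upwards [Ioo_mem_nhdsGT hm.2] with t ht
  refine hT.abs_integral_hamiltonian_le h ha hα f i ⟨hm.1.le.trans ht.1.le, ht.2.le.trans ht₀⟩
    (fun hgood => hbad (hgood.mono_set (Ioc_subset_Ioc_left ht.2.le))) hm.1.le ht.1 y

theorem integrand_eq_zero (hT : IsHJIOperator π r hab c α T)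
    (h : BoundedRates π r L R) (ha : 0 < a) (hα : α ≠ 0) (f : Icc a b × ℕ →ᵇ ℝ) (i : ℕ)
    {t₀ : ℝ} (ht₀ : t₀ ≤ b)
    (hbad : ¬ AEStronglyMeasurable (integrand π r hab f i) (volume.restrict (Ioc t₀ b)))
    {θ : ℝ} (hθ : θ ∈ Ioo a t₀) : integrand π r hab f i θ = 0 :=
  eq_zero_of_forall_integral_eq_zero (g := fun θ' => hamiltonian π r i (slice hab f θ) (1 / θ'))
    ((h.continuousOn_hamiltonian_curve i continuous_const).mono fun _ hθ' => ha.trans_le hθ'.1)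
    (fun _ hm => hT.integral_hamiltonian_eq_zero h ha hα f i ht₀ hbad hm _) hθ

theorem aestronglyMeasurable_integrand (hT : IsHJIOperator π r hab c α T)
    (h : BoundedRates π r L R) (ha : 0 < a) (hα : α ≠ 0) (f : Icc a b × ℕ →ᵇ ℝ) (i : ℕ) :
    AEStronglyMeasurable (integrand π r hab f i) (volume.restrict (Ioc a b)) := by
  -- The integrand vanishes to the left of the supremum of the bad left endpoints `S`.
  by_contra hbad
  set S := {t ∈ Icc a b |
    ¬ AEStronglyMeasurable (integrand π r hab f i) (volume.restrict (Ioc t b))}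
  have haS : a ∈ S := ⟨left_mem_Icc.2 hab, hbad⟩
  have hbdd : BddAbove S := ⟨b, fun t ht => ht.1.2⟩
  have has : a ≤ sSup S := le_csSup hbdd haS
  have hsb : sSup S ≤ b := csSup_le ⟨a, haS⟩ fun t ht => ht.1.2
  have hright : AEStronglyMeasurable (integrand π r hab f i) (volume.restrict (Ioc (sSup S) b)) :=
    aestronglyMeasurable_Ioc_of_forall_Ioc fun u v hu huv hv => by
      by_contra huv'
      have huS : u ∈ S := ⟨⟨has.trans hu.le, huv.le.trans hv.le⟩,
        fun hgood => huv' (hgood.mono_set (Ioc_subset_Ioc_right hv.le))⟩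
      exact hu.not_ge (le_csSup hbdd huS)
  have hleft : AEStronglyMeasurable (integrand π r hab f i) (volume.restrict (Ioc a (sSup S))) := by
    rw [← Measure.restrict_congr_set Ioo_ae_eq_Ioc]
    refine (aestronglyMeasurable_const (b := (0 : ℝ))).congr
      ((ae_restrict_iff' measurableSet_Ioo).2 (.of_forall fun θ hθ => ?_))
    obtain ⟨t, htS, hθt⟩ := exists_lt_of_lt_csSup ⟨a, haS⟩ hθ.2
    exact (hT.integrand_eq_zero h ha hα f i htS.1.2 htS.2 ⟨hθ.1, hθt⟩).symm
  exact hbad (Ioc_union_Ioc_eq_Ioc has hsb ▸ aestronglyMeasurable_union_iff.2 ⟨hleft, hright⟩)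

theorem intervalIntegrable_integrand (hT : IsHJIOperator π r hab c α T)
    (h : BoundedRates π r L R) (ha : 0 < a) (hα : α ≠ 0) (f : Icc a b × ℕ →ᵇ ℝ) (i : ℕ)
    {η : ℝ} (hη : η ∈ Icc a b) : IntervalIntegrable (integrand π r hab f i) volume a η :=
  (intervalIntegrable_iff_aestronglyMeasurable_of_abs_le hη.1 fun θ hθ =>
    h.abs_hamiltonian_one_div_le i ha hθ.1.le (norm_slice_le hab f θ)).2
    ((hT.aestronglyMeasurable_integrand h ha hα f i).mono_set (Ioc_subset_Ioc_right hη.2))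

theorem abs_integrand_sub_le (h : BoundedRates π r L R) (f g : Icc a b × ℕ →ᵇ ℝ) (i : ℕ)
    {θ : ℝ} (hθ : 0 < θ) :
    |integrand π r hab f i θ - integrand π r hab g i θ| ≤ (L / θ + R) * ‖f - g‖ := by
  have := h.abs_hamiltonian_sub_le i (slice hab f θ) (slice hab g θ) (1 / θ) (1 / θ)
  rw [sub_self, abs_zero, mul_zero, zero_mul, add_zero, ← slice_sub,
    abs_of_pos (one_div_pos.2 hθ), mul_one_div] at this
  exact this.trans (mul_le_mul_of_nonneg_left (norm_slice_le hab _ θ)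
    (add_nonneg (div_nonneg h.rateBound_nonneg hθ.le) h.rewardBound_nonneg))

theorem norm_sub_le (hT : IsHJIOperator π r hab c α T) (h : BoundedRates π r L R)
    (ha : 0 < a) (hα : 0 < α) (f g : Icc a b × ℕ →ᵇ ℝ) :
    ‖T f - T g‖ ≤ 1 / α * (R * (b - a) + L * Real.log (b / a)) * ‖f - g‖ := by
  have hL := h.rateBound_nonneg
  have hR := h.rewardBound_nonneg
  have hba : 0 ≤ b - a := sub_nonneg.2 hab
  have hlog : 0 ≤ Real.log (b / a) := Real.log_nonneg ((one_le_div ha).2 hab)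
  refine (BoundedContinuousFunction.norm_le (by positivity)).2 fun ⟨η, i⟩ => ?_
  have hη : a ≤ (η : ℝ) := η.2.1
  have hint (u : Icc a b × ℕ →ᵇ ℝ) := hT.intervalIntegrable_integrand h ha hα.ne' u i η.2
  rw [BoundedContinuousFunction.coe_sub, Pi.sub_apply, hT f, hT g, add_sub_add_left_eq_sub,
    ← mul_sub, ← intervalIntegral.integral_sub (hint f) (hint g), norm_mul,
    Real.norm_of_nonneg (by positivity), mul_assoc]
  refine mul_le_mul_of_nonneg_left ?_ (by positivity)
  have hbound : IntervalIntegrable (fun θ => (L / θ + R) * ‖f - g‖) volume a η :=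
    ContinuousOn.intervalIntegrable_of_Icc hη fun θ hθ =>
      ((continuousAt_const.div continuousAt_id (ha.trans_le hθ.1).ne').add continuousAt_const
        |>.mul continuousAt_const).continuousWithinAt
  calc _ ≤ ∫ θ in a..η, (L / θ + R) * ‖f - g‖ :=
        intervalIntegral.norm_integral_le_of_norm_le hη
          (.of_forall fun θ hθ => abs_integrand_sub_le h f g i (ha.trans hθ.1)) hbound
    _ = (R * (η - a) + L * Real.log (η / a)) * ‖f - g‖ := by
        rw [intervalIntegral.integral_mul_const, integral_div_add_const ha (ha.trans_le hη)]
    _ ≤ (R * (b - a) + L * Real.log (b / a)) * ‖f - g‖ := by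
        have := η.2.2
        gcongr
        exact div_pos (ha.trans_le hη) ha

end IsHJIOperator

end Operator

theorem existsUnique_fixedPoint_of_norm_sub_le {E : Type*} [NormedAddCommGroup E]
    [CompleteSpace E] {T : E → E} {q : ℝ} (hq : q < 1)
    (hT : ∀ x y, ‖T x - T y‖ ≤ q * ‖x - y‖) : ∃! x, T x = x := by
  have hT' : ContractingWith q.toNNReal T := by
    refine ⟨Real.toNNReal_lt_one.2 hq, LipschitzWith.of_dist_le_mul fun x y => ?_⟩
    rw [dist_eq_norm, dist_eq_norm]
    exact (hT x y).trans (mul_le_mul_of_nonneg_right (Real.le_coe_toNNReal q) (norm_nonneg _))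
  exact ⟨_, hT'.fixedPoint_isFixedPt, fun _ hx => hT'.fixedPoint_unique hx⟩

theorem stmt_0_general
    (α ε δ M rM : ℝ) (hα : 0 < α) (hε : 0 < ε)
    (hle : ε ≤ ε + δ)
    (V1 V2 : Type) [Nonempty V1] [Nonempty V2]
    (π : ℕ → ℕ → V1 → V2 → ℝ) (r : ℕ → V1 → V2 → ℝ)
    (hπoff : ∀ i j v1 v2, i ≠ j → 0 ≤ π i j v1 v2)
    (hπcons : ∀ i v1 v2, HasSum (fun j => π i j v1 v2) 0)
    (hπM : ∀ i v1 v2, -π i i v1 v2 ≤ M)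
    (hr0 : ∀ i v1 v2, 0 ≤ r i v1 v2) (hrM : ∀ i v1 v2, r i v1 v2 ≤ rM)
    (T : BoundedContinuousFunction (Set.Icc ε (ε + δ) × ℕ) ℝ →
         BoundedContinuousFunction (Set.Icc ε (ε + δ) × ℕ) ℝ)
    (hT : ∀ f (η : Set.Icc ε (ε + δ)) (i : ℕ),
      T f (η, i) = Real.exp (ε / α * rM) + (1 / α) *
        ∫ θ in ε..(η : ℝ), ⨅ v1 : V1, ⨆ v2 : V2,
          ((1 / θ) * ∑' j : ℕ, π i j v1 v2 * Set.IccExtend hle (fun t => f (t, j)) θ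
            + r i v1 v2 * Set.IccExtend hle (fun t => f (t, i)) θ)) :
    (∀ f1 f2, ‖T f1 - T f2‖ ≤ (1 / α) * (rM * δ + 2 * M * Real.log (1 + δ / ε)) * ‖f1 - f2‖)
    ∧ ((1 / α) * (rM * δ + 2 * M * Real.log (1 + δ / ε)) < 1 → ∃! f, T f = f) := by
  have hT' : IsHJIOperator π r hle (Real.exp (ε / α * rM)) α T := hT
  have hrates := boundedRates_of_conservative hπoff hπcons hπM hr0 hrM
  have hlip (f1 f2) :
      ‖T f1 - T f2‖ ≤ (1 / α) * (rM * δ + 2 * M * Real.log (1 + δ / ε)) * ‖f1 - f2‖ := by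
    have hlen : ε + δ - ε = δ := by ring
    have hratio : (ε + δ) / ε = 1 + δ / ε := by field_simp
    simpa only [hlen, hratio] using hT'.norm_sub_le hrates hε hα f1 f2
  exact ⟨hlip, fun hq => existsUnique_fixedPoint_of_norm_sub_le hq hlip⟩

/-- The fixed-point operator for the discounted risk-sensitive HJI equation is Lipschitz with
constant `(1/α)(‖r‖∞ δ + 2M ln(1+δ/ε))`, and hence a contraction with a unique fixed point
when this constant is `< 1`. -/
theorem stmt_0
    (α ε δ M rM : ℝ) (hα : 0 < α) (hε : 0 < ε) (hδ : 0 < δ) (hM : 0 ≤ M)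
    (hle : ε ≤ ε + δ)
    (V1 V2 : Type) [TopologicalSpace V1] [TopologicalSpace V2]
    [CompactSpace V1] [CompactSpace V2] [Nonempty V1] [Nonempty V2]
    (π : ℕ → ℕ → V1 → V2 → ℝ) (r : ℕ → V1 → V2 → ℝ)
    (hπoff : ∀ i j v1 v2, i ≠ j → 0 ≤ π i j v1 v2)
    (hπcons : ∀ i v1 v2, HasSum (fun j => π i j v1 v2) 0)
    (hπM : ∀ i v1 v2, -π i i v1 v2 ≤ M)
    (hr0 : ∀ i v1 v2, 0 ≤ r i v1 v2) (hrM : ∀ i v1 v2, r i v1 v2 ≤ rM)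
    (T : BoundedContinuousFunction (Set.Icc ε (ε + δ) × ℕ) ℝ →
         BoundedContinuousFunction (Set.Icc ε (ε + δ) × ℕ) ℝ)
    (hT : ∀ f (η : Set.Icc ε (ε + δ)) (i : ℕ),
      T f (η, i) = Real.exp (ε / α * rM) + (1 / α) *
        ∫ θ in ε..(η : ℝ), ⨅ v1 : V1, ⨆ v2 : V2,
          ((1 / θ) * ∑' j : ℕ, π i j v1 v2 * Set.IccExtend hle (fun t => f (t, j)) θ
            + r i v1 v2 * Set.IccExtend hle (fun t => f (t, i)) θ)) :
    (∀ f1 f2, ‖T f1 - T f2‖ ≤ (1 / α) * (rM * δ + 2 * M * Real.log (1 + δ / ε)) * ‖f1 - f2‖)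
    ∧ ((1 / α) * (rM * δ + 2 * M * Real.log (1 + δ / ε)) < 1 → ∃! f, T f = f) :=
  stmt_0_general α ε δ M rM hα hε hle V1 V2 π r hπoff hπcons hπM hr0 hrM T hT
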